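/- arXiv:1109.2322 — 6 statements merged into one kernel-verified Lean document; each statement's English description precedes it below -/
import Mathlib

section
/- With the quaternion-type subspaces T_0, T_1, T_2, T_3 of a Clifford algebra Cl(Q) defined via involute and reverse, if x ∈ T_k and y ∈ T_k (same k, for any k = 0,1,2,3), then the commutator [x,y] = x*y - y*x lies in T_2. -/
open CliffordAlgebra

variable {R M : Type*} [CommRing R] [AddCommGroup M] [Module R M]


/-- Quaternion-type subspace `T_k` of the Clifford algebra. -/
def qtype (Q : QuadraticForm R M) (k : ℕ) : Set (CliffordAlgebra Q) :=
  {x | involute x = (-1 : CliffordAlgebra Q) ^ k * x ∧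
       reverse x = (-1 : CliffordAlgebra Q) ^ (k * (k - 1) / 2) * x}

theorem commutator_same_type_mem_qtype_two (Q : QuadraticForm R M) (k : ℕ) (hk : k < 4)
    (x y : CliffordAlgebra Q) (hx : x ∈ qtype Q k) (hy : y ∈ qtype Q k) :
    x * y - y * x ∈ qtype Q 2 := by
  obtain ⟨hx1, hx2⟩ := hx
  obtain ⟨hy1, hy2⟩ := hy
  have key : ∀ (e : CliffordAlgebra Q), (e = 1 ∨ e = -1) →
      ∀ a b : CliffordAlgebra Q, (e * a) * (e * b) = a * b := by
    rintro e (rfl | rfl) a b <;> simp [neg_mul, mul_neg]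
  have sign : ∀ n : ℕ, ((-1 : CliffordAlgebra Q) ^ n = 1 ∨ (-1 : CliffordAlgebra Q) ^ n = -1) := by
    intro n
    rcases Nat.even_or_odd n with h | h
    · exact Or.inl h.neg_one_pow
    · exact Or.inr h.neg_one_pow
  constructor
  · show involute (x * y - y * x) = _
    rw [map_sub, map_mul, map_mul, hx1, hy1, key _ (sign k), key _ (sign k),
      neg_one_sq, one_mul]
  · show reverse (x * y - y * x) = _
    rw [map_sub, reverse.map_mul, reverse.map_mul, hx2, hy2,
      key _ (sign _), key _ (sign _)]
    norm_num
end

section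
/- With quaternion-type subspaces T_k of Cl(Q), if x ∈ T_k (k = 0,1,2,3) and y ∈ T_2, then the commutator [x,y] lies in T_k. -/
open CliffordAlgebra

variable {R M : Type*} [CommRing R] [AddCommGroup M] [Module R M]


theorem commutator_qtype_two_mem_qtype (Q : QuadraticForm R M) (k : ℕ) (hk : k < 4)
    (x y : CliffordAlgebra Q) (hx : x ∈ qtype Q k) (hy : y ∈ qtype Q 2) :
    x * y - y * x ∈ qtype Q k := by
  obtain ⟨hx1, hx2⟩ := hx
  obtain ⟨hy1, hy2⟩ := hy
  norm_num at hy1 hy2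
  have hc : ∀ (n : ℕ) (z : CliffordAlgebra Q), z * (-1 : CliffordAlgebra Q) ^ n
      = (-1 : CliffordAlgebra Q) ^ n * z := fun n z =>
    ((Commute.neg_one_left z).pow_left n).symm
  constructor
  · simp only [map_sub, map_mul, hx1, hy1, mul_sub, mul_assoc]
    rw [← mul_assoc y, hc, mul_assoc]
  · simp only [map_sub, reverse.map_mul, hx2, hy2, mul_sub, neg_mul, mul_neg,
      mul_assoc, sub_neg_eq_add]
    rw [← mul_assoc y, hc, mul_assoc]
    rw [neg_add_eq_sub]
end

section
/- With quaternion-type subspaces T_k of Cl(Q), if x ∈ T_0 and y ∈ T_1 then [x,y] ∈ T_3; if x ∈ T_0 and y ∈ T_3 then [x,y] ∈ T_1; if x ∈ T_1 and y ∈ T_3 then [x,y] ∈ T_0. -/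
open CliffordAlgebra

variable {R M : Type*} [CommRing R] [AddCommGroup M] [Module R M]


theorem commutator_qtype_mixed (Q : QuadraticForm R M) (x y : CliffordAlgebra Q) :
    (x ∈ qtype Q 0 → y ∈ qtype Q 1 → x * y - y * x ∈ qtype Q 3) ∧
    (x ∈ qtype Q 0 → y ∈ qtype Q 3 → x * y - y * x ∈ qtype Q 1) ∧
    (x ∈ qtype Q 1 → y ∈ qtype Q 3 → x * y - y * x ∈ qtype Q 0) := by
  simp only [qtype, Set.mem_setOf_eq]
  refine ⟨?_, ?_, ?_⟩ <;>
    rintro ⟨hix, hrx⟩ ⟨hiy, hry⟩ <;>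
    norm_num at hix hrx hiy hry ⊢ <;>
    constructor <;>
    simp only [map_sub, map_mul, reverse.map_mul, hix, hiy, hrx, hry] <;>
    noncomm_ring
end

section
/- With quaternion-type subspaces T_k of Cl(Q), if x ∈ T_1 and y ∈ T_2 then {x,y} ∈ T_3; if x ∈ T_1 and y ∈ T_3 then {x,y} ∈ T_2; if x ∈ T_2 and y ∈ T_3 then {x,y} ∈ T_1, where {x,y} = x*y + y*x. -/
open CliffordAlgebra

variable {R M : Type*} [CommRing R] [AddCommGroup M] [Module R M]


theorem anticommutator_qtype_mixed (Q : QuadraticForm R M) (x y : CliffordAlgebra Q) :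
    (x ∈ qtype Q 1 → y ∈ qtype Q 2 → x * y + y * x ∈ qtype Q 3) ∧
    (x ∈ qtype Q 1 → y ∈ qtype Q 3 → x * y + y * x ∈ qtype Q 2) ∧
    (x ∈ qtype Q 2 → y ∈ qtype Q 3 → x * y + y * x ∈ qtype Q 1) := by
  refine ⟨fun hx hy => ⟨?_, ?_⟩, fun hx hy => ⟨?_, ?_⟩, fun hx hy => ⟨?_, ?_⟩⟩ <;>
  · obtain ⟨hix, hrx⟩ := hx
    obtain ⟨hiy, hry⟩ := hy
    simp only [map_add, map_mul, reverse.map_mul, hix, hiy, hrx, hry]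
    norm_num
    try abel
end

section
/- Each quaternion-type subspace T_k = {x ∈ Cl(Q) : involute x = (-1)^k x, reverse x = (-1)^{k(k-1)/2} x} is a submodule (R-linear subspace) of the Clifford algebra Cl(Q), and the four subspaces T_0, T_1, T_2, T_3 are independent, i.e., Cl(Q) contains their internal direct sum. -/
open CliffordAlgebra

variable {R M : Type*} [CommRing R] [AddCommGroup M] [Module R M]


/-! The `T_k` are the joint eigenspaces of the involutions `involute` and `reverse` for the four
distinct sign pairs `((-1)^k, (-1)^(k(k-1)/2))`. For a sign pair `(a, b)` the operator
`(1 + b • reverse) * (1 + a • involute)` acts on the joint eigenspace of `(a', b')` as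
`(1 + b b')(1 + a a')`, which is `4` if `(a', b') = (a, b)` and `0` otherwise; as `4` is
invertible, this separates the eigenspaces. -/

namespace Int

lemma one_add_cast_units_mul_self (u : ℤˣ) : (1 + (u : R) * (u : R) : R) = 2 := by
  rw [← Int.cast_mul, ← Units.val_mul, Int.units_mul_self]
  norm_num

lemma one_add_cast_units_mul_of_ne {u v : ℤˣ} (h : u ≠ v) : (1 + (u : R) * (v : R) : R) = 0 := by
  rw [Int.units_ne_iff_eq_neg.mp h, ← Int.cast_mul, ← Units.val_mul, neg_mul,
    Int.units_mul_self]
  norm_num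

end Int

namespace Module.End

lemma one_add_smul_mul_one_add_smul_apply {f g : End R M} {a b a' b' : R} {x : M}
    (hf : x ∈ f.eigenspace a') (hg : x ∈ g.eigenspace b') :
    ((1 + b • g) * (1 + a • f)) x = ((1 + b * b') * (1 + a * a')) • x := by
  rw [mem_eigenspace_iff] at hf hg
  simp only [mul_apply, LinearMap.add_apply, LinearMap.smul_apply, one_apply, map_add, map_smul,
    hf, hg]
  match_scalars
  ring

theorem iSupIndep_eigenspace_inf_eigenspace [Invertible (2 : R)] {ι : Type*}
    (f g : End R M) {s : ι → ℤˣ × ℤˣ} (hs : Function.Injective s) :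
    iSupIndep fun i => f.eigenspace ((s i).1 : R) ⊓ g.eigenspace ((s i).2 : R) := by
  intro i
  set P := (1 + ((s i).2 : R) • g) * (1 + ((s i).1 : R) • f)
  have hker : ⨆ (j) (_ : j ≠ i), f.eigenspace ((s j).1 : R) ⊓ g.eigenspace ((s j).2 : R) ≤
      LinearMap.ker P := by
    refine iSup₂_le fun j hj x hx => ?_
    have hsign : (s i).1 ≠ (s j).1 ∨ (s i).2 ≠ (s j).2 := by
      rw [← not_and_or, ← Prod.ext_iff]
      exact fun h => hj (hs h).symm
    rw [LinearMap.mem_ker, one_add_smul_mul_one_add_smul_apply hx.1 hx.2]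
    rcases hsign with h | h <;> simp [Int.one_add_cast_units_mul_of_ne h]
  refine Disjoint.mono_right hker (Submodule.disjoint_def.mpr fun x hx hPx => ?_)
  rw [LinearMap.mem_ker, one_add_smul_mul_one_add_smul_apply hx.1 hx.2,
    Int.one_add_cast_units_mul_self, Int.one_add_cast_units_mul_self] at hPx
  exact ((isUnit_of_invertible (2 : R)).mul (isUnit_of_invertible 2)).smul_eq_zero.mp hPx

end Module.End

def qtypeSigns (k : ℕ) : ℤˣ × ℤˣ :=
  ((-1) ^ k, (-1) ^ (k * (k - 1) / 2))

lemma qtypeSigns_injective : Function.Injective fun k : Fin 4 => qtypeSigns k := by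
  decide

lemma qtype_eq_eigenspace_inf_eigenspace (Q : QuadraticForm R M) (k : ℕ) :
    qtype Q k = ↑(Module.End.eigenspace (involute (Q := Q)).toLinearMap ((qtypeSigns k).1 : R) ⊓
      Module.End.eigenspace (reverse (Q := Q)) ((qtypeSigns k).2 : R)) := by
  ext x
  simp [qtype, qtypeSigns, Algebra.smul_def]

theorem qtype_submodule_independent (Q : QuadraticForm R M) [Invertible (2 : R)] :
    ∃ S : Fin 4 → Submodule R (CliffordAlgebra Q),
      (∀ k : Fin 4, (S k : Set (CliffordAlgebra Q)) = qtype Q k) ∧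
      iSupIndep S :=
  ⟨_, fun k => (qtype_eq_eigenspace_inf_eigenspace Q k).symm,
    Module.End.iSupIndep_eigenspace_inf_eigenspace _ _ qtypeSigns_injective⟩
end

section
/- Let R be a commutative ring in which 2 is invertible and Q a quadratic form over R. Then every element x of the Clifford algebra Cl(Q) decomposes as x = x₀ + x₁ + x₂ + x₃ where x_k ∈ T_k, explicitly: x₀ = (x + involute x + reverse x + reverse (involute x))/4, x₁ = (x - involute x + reverse x - reverse (involute x))/4, x₂ = (x + involute x - reverse x - reverse (involute x))/4, x₃ = (x - involute x - reverse x + reverse (involute x))/4. -/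
open CliffordAlgebra

variable {R M : Type*} [CommRing R] [AddCommGroup M] [Module R M]


theorem qtype_decomposition (Q : QuadraticForm R M) [Invertible (2 : R)]
    (x : CliffordAlgebra Q) :
    x = (⅟(2 : R) * ⅟(2 : R)) • (x + involute x + reverse x + reverse (involute x))
      + (⅟(2 : R) * ⅟(2 : R)) • (x - involute x + reverse x - reverse (involute x))
      + (⅟(2 : R) * ⅟(2 : R)) • (x + involute x - reverse x - reverse (involute x))
      + (⅟(2 : R) * ⅟(2 : R)) • (x - involute x - reverse x + reverse (involute x)) ∧
    (⅟(2 : R) * ⅟(2 : R)) • (x + involute x + reverse x + reverse (involute x)) ∈ qtype Q 0 ∧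
    (⅟(2 : R) * ⅟(2 : R)) • (x - involute x + reverse x - reverse (involute x)) ∈ qtype Q 1 ∧
    (⅟(2 : R) * ⅟(2 : R)) • (x + involute x - reverse x - reverse (involute x)) ∈ qtype Q 2 ∧
    (⅟(2 : R) * ⅟(2 : R)) • (x - involute x - reverse x + reverse (involute x)) ∈ qtype Q 3 := by
  have e1 : involute (involute x) = x := involute_involute x
  have e2 : involute (reverse x) = reverse (involute x) := (reverse_involute x).symm
  have e3 : involute (reverse (involute x)) = reverse x := by
    rw [← reverse_involute, involute_involute]
  have e4 : reverse (reverse x) = x := reverse_reverse x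
  have e6 : reverse (reverse (involute x)) = involute x := by
    rw [reverse_reverse]
  refine ⟨?_, ?_, ?_, ?_, ?_⟩
  · rw [← smul_add, ← smul_add, ← smul_add]
    have h4 : (x + involute x + reverse x + reverse (involute x))
        + (x - involute x + reverse x - reverse (involute x))
        + (x + involute x - reverse x - reverse (involute x))
        + (x - involute x - reverse x + reverse (involute x)) = ((2 : R) * 2) • x := by
      rw [mul_smul, two_smul, two_smul]
      abel
    rw [h4, smul_smul, mul_mul_mul_comm, invOf_mul_self, one_mul, one_smul]
  all_goals
    refine ⟨?_, ?_⟩ <;>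
    simp only [qtype, Set.mem_setOf_eq, map_smul, map_add, map_sub, e1, e2, e3, e4, e6,
      Nat.reduceMul, Nat.reduceDiv, Nat.reduceSub, pow_zero, pow_one, neg_one_sq,
      pow_succ, one_mul, mul_one, neg_one_mul, neg_neg] <;>
    module
end
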